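/- For a, b ∈ ℝ with a ≠ 0 and b₁ < b/a < 3 − 2√3, where b₁ = (3/7)(3 − 2·9^{1/3}/(−12+7√3)^{1/3} + 2(−36+21√3)^{1/3}), the polynomial P_{a,b}(x,y) = ax³ + bx²y + bxy² + ay³ satisfies sup_{(x,y)∈[−1,1]²} |P_{a,b}(x,y)| = |a − b²/(3a) + 2b³/(27a²) + (2a/27)(−3b/a + b²/a²)^{3/2}|. -/

import Mathlib

/-- Supremum of `|a x³ + b x² y + b x y² + a y³|` over the unit square `[-1,1]²`. -/
noncomputable def supCubic (a b : ℝ) : ℝ :=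
  sSup {r : ℝ | ∃ x y : ℝ, |x| ≤ 1 ∧ |y| ≤ 1 ∧
    r = |a * x^3 + b * x^2 * y + b * x * y^2 + a * y^3|}

noncomputable def b₁ : ℝ :=
  (3/7) * (3 - 2 * (9:ℝ) ^ ((1:ℝ)/3) / (-12 + 7 * Real.sqrt 3) ^ ((1:ℝ)/3)
      + 2 * (-36 + 21 * Real.sqrt 3) ^ ((1:ℝ)/3))

/-!
Write `t = b / a`, so that `P_{a,b} = a · f_t` with `f_t(x, y) = x³ + t x²y + t xy² + y³`.
In the variables `u = x + y`, `v = xy` one has `f_t = u³ + (t - 3) u v`, and on the half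
`u ≥ 0` of the square `v` ranges between `u - 1` and `u² / 4`. Since `t < 3`, `f_t` is
therefore bounded above by its values `u³ + (t - 3) u (u - 1)` on the edges and below by
`(t + 1) u³ / 4 ≥ min 0 (2 (t + 1))`. The condition `t < 3 - 2√3` puts the critical point
of the edge cubic inside the edge, where it takes the value `M = 1 - t²/3 + 2t³/27 + 2s³/27`,
`s = √(t² - 3t)`; and `b₁` is the real root of `7t³ - 27t² + 81t + 243`, whose positivity
is exactly `2 (t + 1) ≥ -M`. Hence `max |f_t| = M`, and the other half of the square
follows from `f_t(-x, -y) = -f_t(x, y)`.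
-/

open Real

lemma cardano_radicand_pos : 0 < -12 + 7 * √3 := by
  have : (12:ℝ) / 7 < √3 := by rw [lt_sqrt (by norm_num)]; norm_num
  linarith

lemma b₁_eq_cardano :
    b₁ = 3 / 7 * (3 + 2 * (-36 + 21 * √3) ^ ((1:ℝ) / 3)
      - 6 / (-36 + 21 * √3) ^ ((1:ℝ) / 3)) := by
  have hA₀ : (0:ℝ) < (-12 + 7 * √3) ^ ((1:ℝ) / 3) := rpow_pos_of_pos cardano_radicand_pos _
  have hcube : (9:ℝ) ^ ((1:ℝ) / 3) * (3:ℝ) ^ ((1:ℝ) / 3) = 3 := by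
    rw [← mul_rpow (by norm_num) (by norm_num), show (9:ℝ) * 3 = 3 ^ (3:ℝ) by norm_num,
      ← rpow_mul (by norm_num)]
    norm_num
  have hBA : (-36 + 21 * √3) ^ ((1:ℝ) / 3)
      = (3:ℝ) ^ ((1:ℝ) / 3) * (-12 + 7 * √3) ^ ((1:ℝ) / 3) := by
    rw [← mul_rpow (by norm_num) cardano_radicand_pos.le]; ring_nf
  have hdiv : 6 / (-36 + 21 * √3) ^ ((1:ℝ) / 3)
      = 2 * (9:ℝ) ^ ((1:ℝ) / 3) / (-12 + 7 * √3) ^ ((1:ℝ) / 3) := by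
    rw [hBA, div_eq_div_iff (by positivity) hA₀.ne']
    linear_combination (-2) * (-12 + 7 * √3) ^ ((1:ℝ) / 3) * hcube
  rw [hdiv, b₁]; ring

lemma b₁_root : 7 * b₁ ^ 3 - 27 * b₁ ^ 2 + 81 * b₁ + 243 = 0 := by
  set B := (-36 + 21 * √3) ^ ((1:ℝ) / 3) with hB
  have h3 : √3 ^ 2 = 3 := sq_sqrt (by norm_num)
  have hbase : (0:ℝ) < -36 + 21 * √3 := by linarith [cardano_radicand_pos]
  have hB0 : 0 < B := rpow_pos_of_pos hbase _
  have hB3 : B ^ 3 = -36 + 21 * √3 := by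
    rw [hB, ← rpow_natCast, ← rpow_mul hbase.le]; norm_num
  -- Cardano: `w = 2B - 6/B` solves `w³ + 36 w + 576 = 0`, and `b₁ = 3/7 (3 + w)`.
  have hw : (2 * B - 6 / B) ^ 3 + 36 * (2 * B - 6 / B) + 576 = 0 := by
    field_simp
    linear_combination (8 * B ^ 3 + 8 * (36 + 21 * √3)) * hB3 + 3528 * h3
  rw [b₁_eq_cardano, ← hB]
  linear_combination 27 / 49 * hw

lemma cubic_pos_of_b₁_lt {t : ℝ} (h : b₁ < t) :
    0 < 7 * t ^ 3 - 27 * t ^ 2 + 81 * t + 243 := by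
  have hd : 0 < t - b₁ := by linarith
  nlinarith [mul_nonneg hd.le (sq_nonneg (t - b₁)),
    mul_nonneg hd.le (sq_nonneg (t + b₁ - 18 / 7)), b₁_root]

lemma neg_three_lt_of_cubic_pos {t : ℝ} (h : 0 < 7 * t ^ 3 - 27 * t ^ 2 + 81 * t + 243) :
    -3 < t := by
  by_contra! ht
  nlinarith [mul_nonneg (show (0:ℝ) ≤ -3 - t by linarith) (sq_nonneg t), sq_nonneg (t + 3)]

def cubicForm (t x y : ℝ) : ℝ := x ^ 3 + t * x ^ 2 * y + t * x * y ^ 2 + y ^ 3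

/-- For `s² = t² - 3t` this is `cubicForm t (-(t + s) / 3) 1`, the value at the local maximum
of `cubicForm t` on the edge `y = 1`. -/
noncomputable def cubicPeak (t s : ℝ) : ℝ := 1 - t ^ 2 / 3 + 2 * t ^ 3 / 27 + 2 * s ^ 3 / 27

lemma cubicForm_eq_sum_prod (t x y : ℝ) :
    cubicForm t x y = (x + y) ^ 3 + (t - 3) * (x + y) * (x * y) := by
  unfold cubicForm; ring

lemma cubicForm_neg (t x y : ℝ) : cubicForm t (-x) (-y) = -cubicForm t x y := by
  unfold cubicForm; ring

lemma abs_cubicForm_mul (a t x y : ℝ) :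
    |a * x ^ 3 + a * t * x ^ 2 * y + a * t * x * y ^ 2 + a * y ^ 3| = |a| * |cubicForm t x y| := by
  rw [← abs_mul, cubicForm]; ring_nf

section Peak

variable {t s : ℝ}

lemma cubicForm_critical (hs : s ^ 2 = t ^ 2 - 3 * t) :
    cubicForm t (-(t + s) / 3) 1 = cubicPeak t s := by
  unfold cubicForm cubicPeak
  linear_combination (-s / 9) * hs

lemma edge_le_cubicPeak (hs : s ^ 2 = t ^ 2 - 3 * t) (hst : 3 + t ≤ 2 * s) {u : ℝ}
    (hu : u ≤ 2) : u ^ 3 + (t - 3) * u * (u - 1) ≤ cubicPeak t s := by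
  have key : cubicPeak t s - (u ^ 3 + (t - 3) * u * (u - 1))
      = (u - 1 + t / 3 + s / 3) ^ 2 * (1 - t / 3 + 2 * s / 3 - u) := by
    unfold cubicPeak
    linear_combination (1 / 3 - u / 3 - t / 9) * hs
  have hu' : 0 ≤ 1 - t / 3 + 2 * s / 3 - u := by linarith
  nlinarith [mul_nonneg (sq_nonneg (u - 1 + t / 3 + s / 3)) hu']

lemma cubicPeak_nonneg (hs : s ^ 2 = t ^ 2 - 3 * t) (hst : 3 + t ≤ 2 * s) :
    0 ≤ cubicPeak t s := by
  simpa using edge_le_cubicPeak hs hst zero_le_two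

/-- `2 (t + 1)` is the value of `cubicForm t` at the corner `(1, 1)`. -/
lemma neg_cubicPeak_le (hs : s ^ 2 = t ^ 2 - 3 * t) (hs₀ : 0 < s)
    (hcub : 0 < 7 * t ^ 3 - 27 * t ^ 2 + 81 * t + 243) : -cubicPeak t s ≤ 2 * (t + 1) := by
  suffices 0 ≤ 2 * s ^ 3 + (2 * t ^ 3 - 9 * t ^ 2 + 54 * t + 81) by unfold cubicPeak; linarith
  have hs3 : 0 < s ^ 3 := pow_pos hs₀ 3
  rcases le_or_gt 0 (2 * t ^ 3 - 9 * t ^ 2 + 54 * t + 81) with h | h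
  · linarith
  have ht : t + 1 ≤ 0 := by
    by_contra! ht
    have hq : 0 ≤ 2 * t ^ 2 - 11 * t + 65 := by nlinarith [sq_nonneg (t - 11 / 4)]
    nlinarith [mul_nonneg ht.le hq]
  have hsq : (2 * t ^ 3 - 9 * t ^ 2 + 54 * t + 81) ^ 2 ≤ (2 * s ^ 3) ^ 2 := by
    have hid : (2 * s ^ 3) ^ 2 - (2 * t ^ 3 - 9 * t ^ 2 + 54 * t + 81) ^ 2
        = -27 * (t + 1) * (7 * t ^ 3 - 27 * t ^ 2 + 81 * t + 243) := by
      rw [show (2 * s ^ 3) ^ 2 = 4 * (s ^ 2) ^ 3 by ring, hs]; ring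
    nlinarith [mul_nonpos_of_nonpos_of_nonneg ht hcub.le]
  nlinarith [(abs_le_of_sq_le_sq' hsq (by positivity)).1]

end Peak

section Square

variable {t s x y : ℝ}

lemma cubicForm_le_cubicPeak (hs : s ^ 2 = t ^ 2 - 3 * t) (hst : 3 + t ≤ 2 * s) (ht : t ≤ 3)
    (hx : |x| ≤ 1) (hy : |y| ≤ 1) (hxy : 0 ≤ x + y) : cubicForm t x y ≤ cubicPeak t s := by
  rw [abs_le] at hx hy
  have hv : x + y - 1 ≤ x * y := by
    nlinarith [mul_nonneg (by linarith : 0 ≤ 1 - x) (by linarith : 0 ≤ 1 - y)]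
  have hneg : (t - 3) * (x + y) ≤ 0 := mul_nonpos_of_nonpos_of_nonneg (by linarith) hxy
  calc cubicForm t x y = (x + y) ^ 3 + (t - 3) * (x + y) * (x * y) := cubicForm_eq_sum_prod t x y
    _ ≤ (x + y) ^ 3 + (t - 3) * (x + y) * (x + y - 1) :=
      add_le_add_right (mul_le_mul_of_nonpos_left hv hneg) _
    _ ≤ cubicPeak t s := edge_le_cubicPeak hs hst (by linarith)

lemma min_le_cubicForm (ht : t ≤ 3) (hx : |x| ≤ 1) (hy : |y| ≤ 1) (hxy : 0 ≤ x + y) :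
    min 0 (2 * (t + 1)) ≤ cubicForm t x y := by
  rw [abs_le] at hx hy
  have hv : x * y ≤ (x + y) ^ 2 / 4 := by nlinarith [sq_nonneg (x - y)]
  have hneg : (t - 3) * (x + y) ≤ 0 := mul_nonpos_of_nonpos_of_nonneg (by linarith) hxy
  have hu₀ : 0 ≤ (x + y) ^ 3 := pow_nonneg hxy 3
  have hu₈ : (x + y) ^ 3 ≤ 8 := by
    rw [show (8:ℝ) = 2 ^ 3 by norm_num]; exact pow_le_pow_left₀ hxy (by linarith) 3
  calc min 0 (2 * (t + 1)) ≤ (t + 1) * (x + y) ^ 3 / 4 := by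
        rcases le_total 0 (t + 1) with h | h
        · exact (min_le_left _ _).trans (by positivity)
        · exact (min_le_right _ _).trans (by nlinarith)
    _ = (x + y) ^ 3 + (t - 3) * (x + y) * ((x + y) ^ 2 / 4) := by ring
    _ ≤ (x + y) ^ 3 + (t - 3) * (x + y) * (x * y) :=
      add_le_add_right (mul_le_mul_of_nonpos_left hv hneg) _
    _ = cubicForm t x y := (cubicForm_eq_sum_prod t x y).symm

lemma abs_cubicForm_le (hs : s ^ 2 = t ^ 2 - 3 * t) (hst : 3 + t ≤ 2 * s) (ht : t ≤ 3)
    (hlow : -cubicPeak t s ≤ 2 * (t + 1)) (hx : |x| ≤ 1) (hy : |y| ≤ 1) :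
    |cubicForm t x y| ≤ cubicPeak t s := by
  have hM := cubicPeak_nonneg hs hst
  have half : ∀ x y : ℝ, |x| ≤ 1 → |y| ≤ 1 → 0 ≤ x + y →
      |cubicForm t x y| ≤ cubicPeak t s :=
    fun x y hx hy hxy ↦ abs_le.2
      ⟨le_trans (le_min (by linarith) hlow) (min_le_cubicForm ht hx hy hxy),
        cubicForm_le_cubicPeak hs hst ht hx hy hxy⟩
  rcases le_total 0 (x + y) with hxy | hxy
  · exact half x y hx hy hxy
  · simpa [cubicForm_neg] using half (-x) (-y) (by rwa [abs_neg]) (by rwa [abs_neg]) (by linarith)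

end Square

lemma sq_sub_three_mul_pos {t : ℝ} (h : t < 3 - 2 * √3) : 0 < t ^ 2 - 3 * t := by
  have : (3:ℝ) / 2 < √3 := by rw [lt_sqrt (by norm_num)]; norm_num
  nlinarith

lemma three_add_le_two_sqrt {t : ℝ} (h : t < 3 - 2 * √3) :
    3 + t ≤ 2 * √(t ^ 2 - 3 * t) := by
  have h3 : √3 ^ 2 = 3 := sq_sqrt (by norm_num)
  have hq : 0 < t ^ 2 - 6 * t - 3 := by nlinarith [sqrt_nonneg 3]
  refine (abs_le_of_sq_le_sq' ?_ (by positivity)).2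
  rw [mul_pow, sq_sqrt (sq_sub_three_mul_pos h).le]
  nlinarith

lemma isGreatest_abs_cubicForm {t : ℝ} (h₁ : b₁ < t) (h₂ : t < 3 - 2 * √3) :
    IsGreatest {r | ∃ x y : ℝ, |x| ≤ 1 ∧ |y| ≤ 1 ∧ r = |cubicForm t x y|}
      (cubicPeak t √(t ^ 2 - 3 * t)) := by
  set s := √(t ^ 2 - 3 * t)
  have hq := sq_sub_three_mul_pos h₂
  have hs : s ^ 2 = t ^ 2 - 3 * t := sq_sqrt hq.le
  have hs₀ : 0 < s := sqrt_pos.2 hq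
  have hst := three_add_le_two_sqrt h₂
  have hcub := cubic_pos_of_b₁_lt h₁
  have ht₃ := neg_three_lt_of_cubic_pos hcub
  have ht : t ≤ 3 := by linarith [sqrt_nonneg 3]
  have hs₃ : s < 3 - t := by nlinarith
  refine ⟨⟨-(t + s) / 3, 1, ?_, by norm_num, ?_⟩, ?_⟩
  · rw [abs_le]; constructor <;> linarith
  · rw [cubicForm_critical hs, abs_of_nonneg (cubicPeak_nonneg hs hst)]
  · rintro r ⟨x, y, hx, hy, rfl⟩
    exact abs_cubicForm_le hs hst ht (neg_cubicPeak_le hs hs₀ hcub) hx hy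

lemma supCubic_mul_eq {a t M : ℝ}
    (hM : IsGreatest {r | ∃ x y : ℝ, |x| ≤ 1 ∧ |y| ≤ 1 ∧ r = |cubicForm t x y|} M) :
    supCubic a (a * t) = |a| * M := by
  refine IsGreatest.csSup_eq ⟨?_, ?_⟩
  · obtain ⟨x, y, hx, hy, rfl⟩ := hM.1
    exact ⟨x, y, hx, hy, (abs_cubicForm_mul a t x y).symm⟩
  · rintro r ⟨x, y, hx, hy, rfl⟩
    rw [abs_cubicForm_mul]
    exact mul_le_mul_of_nonneg_left (hM.2 ⟨x, y, hx, hy, rfl⟩) (abs_nonneg a)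

lemma closedForm_eq_mul_cubicPeak {a t s : ℝ} (ha : a ≠ 0) (hs₀ : 0 ≤ s)
    (hs : s ^ 2 = t ^ 2 - 3 * t) :
    a - (a * t) ^ 2 / (3 * a) + 2 * (a * t) ^ 3 / (27 * a ^ 2)
      + (2 * a / 27) * (-(3 * (a * t)) / a + (a * t) ^ 2 / a ^ 2) ^ ((3:ℝ) / 2)
      = a * cubicPeak t s := by
  have hdisc : -(3 * (a * t)) / a + (a * t) ^ 2 / a ^ 2 = s ^ 2 := by
    rw [hs]; field_simp; ring
  rw [hdisc, rpow_div_two_eq_sqrt 3 (sq_nonneg s), sqrt_sq hs₀, rpow_ofNat, cubicPeak]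
  field_simp

theorem stmt10 (a b : ℝ) (ha : a ≠ 0) (h1 : b₁ < b / a) (h2 : b / a < 3 - 2 * Real.sqrt 3) :
    supCubic a b
      = |a - b^2 / (3*a) + 2*b^3 / (27*a^2)
          + (2*a/27) * (-(3*b)/a + b^2/a^2) ^ ((3:ℝ)/2)| := by
  set t := b / a
  have hb : b = a * t := (mul_div_cancel₀ b ha).symm
  have hG := isGreatest_abs_cubicForm h1 h2
  have hM : 0 ≤ cubicPeak t √(t ^ 2 - 3 * t) := by
    obtain ⟨x, y, -, -, h⟩ := hG.1
    exact h ▸ abs_nonneg _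
  rw [hb, supCubic_mul_eq hG, closedForm_eq_mul_cubicPeak ha (sqrt_nonneg _)
    (sq_sqrt (sq_sub_three_mul_pos h2).le), abs_mul, abs_of_nonneg hM]
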